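/- Let G be a 2-connected graph, v a vertex of G, and (E₁, E₂) a partition of the edges incident to v into two nonempty parts. Let G′ be obtained from G by splitting v into two vertices v₁ and v₂, where vᵢ keeps the edges of Eᵢ. Then the block structure of G′ is a chain: its 2-connected components can be ordered B₁,…,B_k so that each Bᵢ has two distinguished distinct vertices wᵢ, wᵢ′ with w₁ = v₁, w_k′ = v₂, and wᵢ′ = w_{i+1} for all 1 ≤ i ≤ k−1, the cut vertices of G′ being exactly the vertices w₂,…,w_k. -/

import Mathlib

open SimpleGraph

/-- `G` is 2-connected: at least 3 vertices, and removing any single vertex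
leaves a connected graph. -/
def TwoConnectedGraph {V : Type*} (G : SimpleGraph V) : Prop :=
  3 ≤ Nat.card V ∧ G.Connected ∧
    ∀ v : V, (G.induce {w : V | w ≠ v}).Connected

/-- `x` is a cut vertex of the connected graph `G`. -/
def IsCutVertex {V : Type*} (G : SimpleGraph V) (x : V) : Prop :=
  G.Connected ∧ ¬ (G.induce {y : V | y ≠ x}).Connected

/-- A set `B` of vertices induces a subgraph without cut vertex. -/
def NoCutSet {V : Type*} (G : SimpleGraph V) (B : Set V) : Prop :=
  (G.induce B).Connected ∧
    ∀ x : B, ((G.induce B).induce {y : B | y ≠ x}).Connected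

/-- `B` is a block (2-connected component) of `G`: a maximal vertex set
inducing a connected subgraph without cut vertex. -/
def IsBlock {V : Type*} (G : SimpleGraph V) (B : Set V) : Prop :=
  NoCutSet G B ∧ ∀ B' : Set V, B ⊆ B' → NoCutSet G B' → B' = B

/-- The graph `G′` obtained from `G` by splitting the vertex `v` into two
vertices `v₁ = Sum.inl v` and `v₂ = Sum.inr ()`, where `v₁` keeps the edges
towards the neighbours in `N₁` and `v₂` those towards the other neighbours. -/
def splitVertex {V : Type*} (G : SimpleGraph V) (v : V) (N₁ : Set V) :
    SimpleGraph (V ⊕ Unit) where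
  Adj x y :=
    match x, y with
    | Sum.inl a, Sum.inl b =>
        G.Adj a b ∧ (a = v → b ∈ N₁) ∧ (b = v → a ∈ N₁)
    | Sum.inl a, Sum.inr _ => G.Adj a v ∧ a ∉ N₁
    | Sum.inr _, Sum.inl b => G.Adj b v ∧ b ∉ N₁
    | Sum.inr _, Sum.inr _ => False
  symm := by
    constructor
    rintro (a | a) (b | b) <;> simp_all <;> tauto
  loopless := by
    constructor
    rintro (a | a) <;> simp [SimpleGraph.irrefl]

/-!
After the split, adding the edge `v₁v₂` gives back a 2-connected graph: in `H - x` every vertex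
still reaches `v₁` or `v₂`. Hence the cut vertices of `H` are exactly the vertices separating
`v₁` from `v₂`. The part before a separator `y` is the component of `H - y` containing `v₁`, the
part after it the one containing `v₂`, and "`x` lies before `y`" linearly orders the separators
`v₁ = n₀, n₁, …, n_k = v₂`. The blocks are the segments between consecutive separators: deleting
a non-separating interior vertex of a segment leaves a `v₁`–`v₂` walk, so a segment has no cut
vertex, while a set without cut vertex lies on one side of every separator, hence inside a
single segment.
-/

namespace SimpleGraph

variable {α : Type*} {G : SimpleGraph α} {S T : Set α} {a b c u u' w x y z : α}

variable (G) in
/-- Walks inside `S`; the trivial walk counts even at a vertex outside `S`. -/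
def ReachableIn (S : Set α) : α → α → Prop :=
  Relation.ReflTransGen fun x y => G.Adj x y ∧ x ∈ S ∧ y ∈ S

namespace ReachableIn

theorem refl (S : Set α) (a : α) : G.ReachableIn S a a := Relation.ReflTransGen.refl

theorem tail (h : G.ReachableIn S a b) (hbc : G.Adj b c) (hb : b ∈ S) (hc : c ∈ S) :
    G.ReachableIn S a c :=
  Relation.ReflTransGen.tail h ⟨hbc, hb, hc⟩

theorem trans (h : G.ReachableIn S a b) (h' : G.ReachableIn S b c) : G.ReachableIn S a c :=
  Relation.ReflTransGen.trans h h'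

theorem symm (h : G.ReachableIn S a b) : G.ReachableIn S b a :=
  haveI : Std.Symm fun x y => G.Adj x y ∧ x ∈ S ∧ y ∈ S :=
    ⟨fun _ _ ⟨hxy, hx, hy⟩ => ⟨hxy.symm, hy, hx⟩⟩
  Std.Symm.symm (r := Relation.ReflTransGen _) _ _ h

theorem mono (hST : S ⊆ T) (h : G.ReachableIn S a b) : G.ReachableIn T a b :=
  Relation.ReflTransGen.mono (fun _ _ ⟨hxy, hx, hy⟩ => ⟨hxy, hST hx, hST hy⟩) _ _ h

theorem reachable (h : G.ReachableIn S a b) : G.Reachable a b := by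
  induction h with
  | refl => rfl
  | tail _ hbc ih => exact ih.trans hbc.1.reachable

theorem exists_exit (h : G.ReachableIn S a b) (ha : a ∈ T) (hb : b ∉ T) :
    ∃ c d, c ∈ S ∩ T ∧ d ∈ S \ T ∧ G.Adj c d ∧ G.ReachableIn (S ∩ T) a c := by
  induction h using Relation.ReflTransGen.head_induction_on with
  | refl => exact absurd ha hb
  | @head a' b' hab _ ih =>
    by_cases hb' : b' ∈ T
    · obtain ⟨c, d, hc, hd, hcd, hbc⟩ := ih hb'
      exact ⟨c, d, hc, hd, hcd, .head ⟨hab.1, ⟨hab.2.1, ha⟩, hab.2.2, hb'⟩ hbc⟩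
    · exact ⟨a', b', ⟨hab.2.1, ha⟩, ⟨hab.2.2, hb'⟩, hab.1, .refl _ _⟩

end ReachableIn

theorem reachableIn_univ_iff : G.ReachableIn Set.univ a b ↔ G.Reachable a b := by
  refine ⟨ReachableIn.reachable, ?_⟩
  rintro ⟨p⟩
  induction p with
  | nil => exact .refl _ _
  | cons hab _ ih => exact Relation.ReflTransGen.head ⟨hab, trivial, trivial⟩ ih

theorem reachable_induce_iff {x y : S} :
    (G.induce S).Reachable x y ↔ G.ReachableIn S x y := by
  constructor
  · rintro ⟨p⟩
    induction p with
    | nil => exact .refl _ _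
    | cons hab _ ih => exact Relation.ReflTransGen.head ⟨hab, Subtype.prop _, Subtype.prop _⟩ ih
  · suffices ∀ b, G.ReachableIn S x b → ∀ hb : b ∈ S, (G.induce S).Reachable x ⟨b, hb⟩ from
      fun h => this y h y.2
    intro b h
    induction h with
    | refl => exact fun _ => .rfl
    | tail _ hbc ih => exact fun _ => (ih hbc.2.1).trans (Adj.reachable (G := G.induce S) hbc.1)

theorem connected_induce_iff_reachableIn :
    (G.induce S).Connected ↔ S.Nonempty ∧ ∀ a ∈ S, ∀ b ∈ S, G.ReachableIn S a b := by
  refine ⟨fun h => ⟨?_, fun a ha b hb => reachable_induce_iff.1 (h ⟨a, ha⟩ ⟨b, hb⟩)⟩,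
    fun ⟨hne, h⟩ => ?_⟩
  · obtain ⟨⟨a, ha⟩⟩ := h.nonempty
    exact ⟨a, ha⟩
  · have := hne.to_subtype
    exact ⟨fun x y => reachable_induce_iff.2 (h _ x.2 _ y.2)⟩

theorem connected_induce_of_forall_reachableIn (hc : c ∈ S)
    (h : ∀ z ∈ S, G.ReachableIn S z c) : (G.induce S).Connected :=
  connected_induce_iff_reachableIn.2 ⟨⟨c, hc⟩, fun a ha b hb => (h a ha).trans (h b hb).symm⟩

def induceInduceIso (G : SimpleGraph α) (B : Set α) (x : B) :
    (G.induce B).induce {y | y ≠ x} ≃g G.induce (B \ {x.1}) where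
  toFun y := ⟨y.1.1, y.1.2, fun h => y.2 (Subtype.ext h)⟩
  invFun z := ⟨⟨z.1, z.2.1⟩, fun h => z.2.2 (congrArg Subtype.val h)⟩
  left_inv _ := rfl
  right_inv _ := rfl
  map_rel_iff' := Iff.rfl

variable (G) in
/-- The vertex set of the component of `G - x` containing `u` (empty when `u = x`). -/
def compAvoiding (x u : α) : Set α :=
  {z | z ≠ x ∧ G.ReachableIn {x}ᶜ u z}

theorem compAvoiding_self : G.compAvoiding x x = ∅ := by
  refine Set.eq_empty_of_forall_notMem fun z ⟨hzx, h⟩ => ?_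
  rcases Relation.ReflTransGen.cases_head h with rfl | ⟨_, hx, _⟩
  exacts [hzx rfl, hx.2.1 rfl]

theorem self_mem_compAvoiding (h : u ≠ x) : u ∈ G.compAvoiding x u :=
  ⟨h, .refl _ _⟩

theorem mem_compAvoiding_of_adj (hz : z ∈ G.compAvoiding x u) (hzy : G.Adj z y) (hy : y ≠ x) :
    y ∈ G.compAvoiding x u :=
  ⟨hy, hz.2.tail hzy hz.1 hy⟩

theorem reachableIn_compAvoiding (hz : z ∈ G.compAvoiding x u) :
    G.ReachableIn (G.compAvoiding x u) u z := by
  obtain ⟨-, h⟩ := hz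
  induction h with
  | refl => exact .refl _ _
  | tail hum hmn ih => exact ih.tail hmn.1 ⟨hmn.2.1, hum⟩ ⟨hmn.2.2, hum.tail hmn⟩

theorem compAvoiding_subset_of_mem (hw : w ∈ G.compAvoiding x u) (hw' : w ∈ G.compAvoiding x u') :
    G.compAvoiding x u' ⊆ G.compAvoiding x u :=
  fun _ hz => ⟨hz.1, (hw.2.trans hw'.2.symm).trans hz.2⟩

theorem subset_compAvoiding_of_connected (hS : (G.induce S).Connected) (hx : x ∉ S) (hc : c ∈ S)
    (hcu : c ∈ G.compAvoiding x u) : S ⊆ G.compAvoiding x u := by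
  have hSx : S ⊆ {x}ᶜ := fun z hz hzx => hx (hzx ▸ hz)
  exact fun z hz => ⟨hSx hz,
    hcu.2.trans (((connected_induce_iff_reachableIn.1 hS).2 c hc z hz).mono hSx)⟩

theorem ReachableIn.exit_compAvoiding (h : G.ReachableIn S a z) (ha : a ∈ G.compAvoiding x u)
    (hz : z ∉ G.compAvoiding x u) : G.ReachableIn (insert x (S ∩ G.compAvoiding x u)) a x := by
  obtain ⟨c, d, hc, hd, hcd, hac⟩ := h.exists_exit ha hz
  obtain rfl : d = x := by_contra fun hdx => hd.2 (mem_compAvoiding_of_adj hc.2 hcd hdx)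
  exact (hac.mono (Set.subset_insert _ _)).tail hcd (Set.mem_insert_of_mem _ hc)
    (Set.mem_insert _ _)

theorem reachableIn_insert_inter_compAvoiding (hz : z ∈ G.compAvoiding x u)
    (hz' : z ∈ G.compAvoiding y u') (hu : u ∉ G.compAvoiding y u') :
    G.ReachableIn (insert y (G.compAvoiding x u ∩ G.compAvoiding y u')) z y :=
  (reachableIn_compAvoiding hz).symm.exit_compAvoiding hz' hu

theorem connected_induce_ne_of_forall (hu : u ≠ x)
    (h : ∀ z, z ≠ x → z ∈ G.compAvoiding x u) : (G.induce {z | z ≠ x}).Connected :=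
  connected_induce_of_forall_reachableIn hu fun z hz => (h z hz).2.symm

variable (G) in
/-- Every `s`–`t` walk passes through `x`; by convention `s` and `t` separate themselves. -/
def Separates (s t x : α) : Prop :=
  Disjoint (G.compAvoiding x s) (G.compAvoiding x t)

end SimpleGraph

section NoCutSet

variable {α : Type*} {G : SimpleGraph α} {B : Set α}

theorem noCutSet_iff :
    NoCutSet G B ↔ (G.induce B).Connected ∧ ∀ x ∈ B, (G.induce (B \ {x})).Connected :=
  and_congr_right' ⟨fun h x hx => (induceInduceIso G B ⟨x, hx⟩).connected_iff.1 (h ⟨x, hx⟩),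
    fun h x => (induceInduceIso G B x).connected_iff.2 (h x x.2)⟩

theorem NoCutSet.connected_induce_diff (hB : NoCutSet G B) (x : α) :
    (G.induce (B \ {x})).Connected := by
  by_cases hx : x ∈ B
  · exact (noCutSet_iff.1 hB).2 x hx
  · rw [Set.sdiff_singleton_eq_self hx]
    exact hB.1

theorem NoCutSet.nontrivial (hB : NoCutSet G B) : B.Nontrivial := by
  obtain ⟨⟨a, ha⟩, -⟩ := connected_induce_iff_reachableIn.1 hB.1
  obtain ⟨⟨b, hb, hba⟩, -⟩ := connected_induce_iff_reachableIn.1 (hB.connected_induce_diff a)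
  exact ⟨b, hb, a, ha, hba⟩

end NoCutSet

namespace SimpleGraph

variable {W : Type*} {H : SimpleGraph W} {s t w x y x' z : W} {C : Set W}

theorem Separates.symm (hx : H.Separates s t x) : H.Separates t s x :=
  Disjoint.symm hx

theorem separates_left : H.Separates s t s := by
  simp [Separates, compAvoiding_self]

theorem Separates.right_notMem (hx : H.Separates s t x) : t ∉ H.compAvoiding x s :=
  fun ht => Set.disjoint_left.1 hx ht (self_mem_compAvoiding ht.1)

theorem Separates.ne_right_of_mem (hx : H.Separates s t x) (hy : y ∈ H.compAvoiding x s) :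
    y ≠ t :=
  fun h => hx.right_notMem (h ▸ hy)

theorem compAvoiding_subset_of_not_separates (hx : ¬ H.Separates s t x) :
    H.compAvoiding x t ⊆ H.compAvoiding x s := by
  obtain ⟨w, hws, hwt⟩ := Set.not_disjoint_iff.1 hx
  exact compAvoiding_subset_of_mem hws hwt

variable (H) in
def segment (s t x y : W) : Set W :=
  insert x (insert y (H.compAvoiding x t ∩ H.compAvoiding y s))

theorem left_mem_segment : x ∈ H.segment s t x y := Set.mem_insert _ _

theorem right_mem_segment : y ∈ H.segment s t x y :=
  Set.mem_insert_of_mem _ (Set.mem_insert _ _)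

theorem mem_segment_of_mem_inter (hw : w ∈ H.compAvoiding x t ∩ H.compAvoiding y s) :
    w ∈ H.segment s t x y :=
  Set.mem_insert_of_mem _ (Set.mem_insert_of_mem _ hw)

theorem connected_induce_segment_diff_left (hy : H.Separates s t y)
    (hxy : x ∈ H.compAvoiding y s) : (H.induce (H.segment s t x y \ {x})).Connected := by
  refine connected_induce_of_forall_reachableIn ⟨right_mem_segment, hxy.1.symm⟩ ?_
  rintro z ⟨rfl | rfl | hz, hzx⟩
  · exact absurd rfl hzx
  · exact .refl _ _
  · refine (reachableIn_insert_inter_compAvoiding hz.1 hz.2 hy.right_notMem).mono ?_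
    rintro w (rfl | hw)
    exacts [⟨right_mem_segment, hxy.1.symm⟩, ⟨mem_segment_of_mem_inter hw, hw.1.1⟩]

theorem connected_induce_segment_diff_right (hx : H.Separates s t x)
    (hxy : x ∈ H.compAvoiding y s) : (H.induce (H.segment s t x y \ {y})).Connected := by
  refine connected_induce_of_forall_reachableIn ⟨left_mem_segment, hxy.1⟩ ?_
  rintro z ⟨rfl | rfl | hz, hzy⟩
  · exact .refl _ _
  · exact absurd rfl hzy
  · refine (reachableIn_insert_inter_compAvoiding hz.2 hz.1 hx.symm.right_notMem).mono ?_
    rintro w (rfl | hw)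
    exacts [⟨left_mem_segment, hxy.1⟩, ⟨mem_segment_of_mem_inter ⟨hw.2, hw.1⟩, hw.1.1⟩]

theorem insert_inter_insert_subset_segment :
    insert x (H.compAvoiding x t) ∩ insert y (H.compAvoiding y s) ⊆ H.segment s t x y := by
  rintro w ⟨rfl | hwx, rfl | hwy⟩
  exacts [left_mem_segment, left_mem_segment, right_mem_segment,
    mem_segment_of_mem_inter ⟨hwx, hwy⟩]

/-- `H` with the extra edge `st` is 2-connected: in `H - x` every vertex still reaches `s` or
`t`. -/
structure IsBiconnectedBetween (H : SimpleGraph W) (s t : W) : Prop where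
  ne : s ≠ t
  reachable : H.Reachable s t
  mem_compAvoiding : ∀ ⦃x z⦄, z ≠ x → z ∈ H.compAvoiding x s ∨ z ∈ H.compAvoiding x t

namespace IsBiconnectedBetween

variable (hH : H.IsBiconnectedBetween s t)
include hH

theorem symm : H.IsBiconnectedBetween t s :=
  ⟨hH.ne.symm, hH.reachable.symm, fun _ _ hz => (hH.mem_compAvoiding hz).symm⟩

theorem mem_compAvoiding_left (hz : z ≠ s) : z ∈ H.compAvoiding s t :=
  (hH.mem_compAvoiding hz).resolve_left (by simp [compAvoiding_self])

theorem reachable_left (z : W) : H.Reachable z s := by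
  obtain rfl | hz := eq_or_ne z s
  · rfl
  · exact ((hH.mem_compAvoiding_left hz).2.reachable.symm.trans hH.reachable.symm)

theorem connected : H.Connected :=
  have : Nonempty W := ⟨s⟩
  ⟨fun y z => (hH.reachable_left y).trans (hH.reachable_left z).symm⟩

theorem mem_compAvoiding_of_not_separates (hx : ¬ H.Separates s t x) (hz : z ≠ x) :
    z ∈ H.compAvoiding x s :=
  (hH.mem_compAvoiding hz).elim id (compAvoiding_subset_of_not_separates hx ·)

theorem reachableIn_insert_compAvoiding (hx : H.Separates s t x) (hxt : x ≠ t) :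
    H.ReachableIn (insert x (H.compAvoiding x t)) t x := by
  have hs : s ∉ H.compAvoiding x t := hx.symm.right_notMem
  simpa using (reachableIn_univ_iff.2 hH.reachable.symm).exit_compAvoiding
    (self_mem_compAvoiding hxt.symm) hs

/-- As `y` lies before `x`, the walk from `x` to `t` through the part after `x` avoids `y`. -/
theorem mem_compAvoiding_swap (hx : H.Separates s t x) (hy : y ∈ H.compAvoiding x s) :
    x ∈ H.compAvoiding y t := by
  obtain rfl | hxt := eq_or_ne x t
  · exact self_mem_compAvoiding hy.1.symm
  have hyt : y ∉ insert x (H.compAvoiding x t) := by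
    rintro (rfl | hy')
    exacts [hy.1 rfl, Set.disjoint_left.1 hx hy hy']
  refine ⟨hy.1.symm, ((hH.reachableIn_insert_compAvoiding hx hxt).mono ?_)⟩
  exact fun w hw hwy => hyt (hwy ▸ hw)

theorem mem_compAvoiding_comm (hx : H.Separates s t x) (hy : H.Separates s t y) :
    y ∈ H.compAvoiding x s ↔ x ∈ H.compAvoiding y t :=
  ⟨hH.mem_compAvoiding_swap hx, hH.symm.mem_compAvoiding_swap hy.symm⟩

theorem mem_compAvoiding_or_mem (hx : H.Separates s t x) (hy : H.Separates s t y) (hxy : x ≠ y) :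
    x ∈ H.compAvoiding y s ∨ y ∈ H.compAvoiding x s :=
  (hH.mem_compAvoiding hxy.symm).symm.imp ((hH.mem_compAvoiding_comm hy hx).2) id

theorem notMem_compAvoiding_of_mem (hx : H.Separates s t x) (hy : H.Separates s t y)
    (hxy : x ∈ H.compAvoiding y s) : y ∉ H.compAvoiding x s :=
  fun hyx => Set.disjoint_left.1 hx hyx (hH.mem_compAvoiding_swap hy hxy)

theorem mem_compAvoiding_trans (hy : H.Separates s t y) (hz : H.Separates s t z)
    (hxy : x ∈ H.compAvoiding y s) (hyz : y ∈ H.compAvoiding z s) : x ∈ H.compAvoiding z s := by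
  have hzy : z ∉ H.compAvoiding y s := hH.notMem_compAvoiding_of_mem hy hz hyz
  exact ⟨fun h => hzy (h ▸ hxy),
    (reachableIn_compAvoiding hxy).mono fun w hw hwz => hzy (hwz ▸ hw)⟩

theorem isCutVertex_iff : IsCutVertex H x ↔ x ≠ s ∧ x ≠ t ∧ H.Separates s t x := by
  refine (and_iff_right hH.connected).trans ⟨fun hx => ?_, fun ⟨hxs, hxt, hx⟩ hconn => ?_⟩
  · have hxs : x ≠ s := by
      rintro rfl
      exact hx (connected_induce_ne_of_forall hH.ne.symm fun _ => hH.mem_compAvoiding_left)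
    have hxt : x ≠ t := by
      rintro rfl
      exact hx (connected_induce_ne_of_forall hH.ne fun _ => hH.symm.mem_compAvoiding_left)
    refine ⟨hxs, hxt, by_contra fun hsep => hx ?_⟩
    exact connected_induce_ne_of_forall hxs.symm fun _ => hH.mem_compAvoiding_of_not_separates hsep
  · have hst := (connected_induce_iff_reachableIn.1 hconn).2 s hxs.symm t hxt.symm
    exact Set.disjoint_left.1 hx ⟨hxt.symm, hst⟩ (self_mem_compAvoiding hxt.symm)

theorem subset_insert_compAvoiding (hC : NoCutSet H C) (x : W) :
    C ⊆ insert x (H.compAvoiding x s) ∨ C ⊆ insert x (H.compAvoiding x t) := by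
  have hCx := hC.connected_induce_diff x
  obtain ⟨⟨c, hc⟩, -⟩ := connected_induce_iff_reachableIn.1 hCx
  have hsub {u : W} (hcu : c ∈ H.compAvoiding x u) : C ⊆ insert x (H.compAvoiding x u) :=
    (Set.subset_insert_sdiff_singleton x C).trans <| Set.insert_subset_insert <|
      subset_compAvoiding_of_connected hCx (fun h => h.2 rfl) hc hcu
  exact (hH.mem_compAvoiding hc.2).imp hsub hsub

section

variable (hx : H.Separates s t x)
include hx

theorem reachableIn_segment (hy : H.Separates s t y) (hxy : x ∈ H.compAvoiding y s) :
    H.ReachableIn (H.segment s t x y) x y := by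
  have hxt : x ≠ t := fun h => hy.right_notMem (h ▸ hxy)
  refine ((hH.reachableIn_insert_compAvoiding hx hxt).symm.exit_compAvoiding hxy
    hy.right_notMem).mono ?_
  rintro w (rfl | ⟨rfl | hw, hw'⟩)
  exacts [right_mem_segment, left_mem_segment, mem_segment_of_mem_inter ⟨hw, hw'⟩]

/-- As `x'` does not separate, `H - x'` has an `s`–`t` walk: cut it at its first visit of `y`,
then follow it back from `y` until it first reaches `x`. -/
theorem reachableIn_segment_diff (hy : H.Separates s t y) (hxy : x ∈ H.compAvoiding y s)
    (hx' : x' ∈ H.compAvoiding x t ∩ H.compAvoiding y s) (hnx' : ¬ H.Separates s t x') :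
    H.ReachableIn (H.segment s t x y \ {x'}) y x := by
  have hys : y ≠ s := by
    rintro rfl
    simp [compAvoiding_self] at hxy
  have hst : H.ReachableIn {x'}ᶜ s t :=
    (hH.mem_compAvoiding_of_not_separates hnx' (hy.ne_right_of_mem hx'.2).symm).2
  have hsy : H.ReachableIn (insert y ({x'}ᶜ ∩ H.compAvoiding y s)) s y :=
    hst.exit_compAvoiding (self_mem_compAvoiding hys.symm) hy.right_notMem
  refine (hsy.symm.exit_compAvoiding (hH.mem_compAvoiding_swap hy hxy)
    hx.symm.right_notMem).mono ?_
  rintro w (rfl | ⟨rfl | ⟨hw, hws⟩, hwt⟩)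
  exacts [⟨left_mem_segment, fun h => hx'.1.1 h.symm⟩, ⟨right_mem_segment, fun h => hx'.2.1 h.symm⟩,
    ⟨mem_segment_of_mem_inter ⟨hwt, hws⟩, hw⟩]

/-- After deleting a non-separating interior vertex `x'`, the first edge of a `z`–`s` walk
that leaves the interior ends in `x` or `y`. -/
theorem reachableIn_segment_diff_of_mem
    (hx' : x' ∈ H.compAvoiding x t ∩ H.compAvoiding y s) (hnx' : ¬ H.Separates s t x')
    (hz : z ∈ H.compAvoiding x t ∩ H.compAvoiding y s) (hzx' : z ≠ x') :
    H.ReachableIn (H.segment s t x y \ {x'}) z x ∨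
      H.ReachableIn (H.segment s t x y \ {x'}) z y := by
  have hs : s ∉ H.compAvoiding x t ∩ H.compAvoiding y s := fun h => hx.symm.right_notMem h.1
  obtain ⟨c, d, hc, hd, hcd, hzc⟩ :=
    (hH.mem_compAvoiding_of_not_separates hnx' hzx').2.symm.exists_exit hz hs
  have hd' : d = x ∨ d = y := by
    by_contra! h
    exact hd.2 ⟨mem_compAvoiding_of_adj hc.2.1 hcd h.1, mem_compAvoiding_of_adj hc.2.2 hcd h.2⟩
  have hdseg : d ∈ H.segment s t x y := by
    rcases hd' with rfl | rfl
    exacts [left_mem_segment, right_mem_segment]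
  have hzd : H.ReachableIn (H.segment s t x y \ {x'}) z d :=
    (hzc.mono (T := H.segment s t x y \ {x'})
      fun w hw => ⟨mem_segment_of_mem_inter hw.2, hw.1⟩).tail hcd
      ⟨mem_segment_of_mem_inter hc.2, hc.1⟩ ⟨hdseg, hd.1⟩
  rcases hd' with rfl | rfl
  exacts [.inl hzd, .inr hzd]

theorem connected_induce_segment_diff (hy : H.Separates s t y) (hxy : x ∈ H.compAvoiding y s)
    (hx' : x' ∈ H.compAvoiding x t ∩ H.compAvoiding y s) (hnx' : ¬ H.Separates s t x') :
    (H.induce (H.segment s t x y \ {x'})).Connected := by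
  have hyx := hH.reachableIn_segment_diff hx hy hxy hx' hnx'
  refine connected_induce_of_forall_reachableIn ⟨left_mem_segment, fun h => hx'.1.1 h.symm⟩ ?_
  rintro z ⟨rfl | rfl | hz, hzx'⟩
  · exact .refl _ _
  · exact hyx
  · exact (hH.reachableIn_segment_diff_of_mem hx hx' hnx' hz hzx').elim id (·.trans hyx)

theorem noCutSet_segment (hy : H.Separates s t y) (hxy : x ∈ H.compAvoiding y s)
    (hI : ∀ z ∈ H.compAvoiding x t ∩ H.compAvoiding y s, ¬ H.Separates s t z) :
    NoCutSet H (H.segment s t x y) := by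
  refine noCutSet_iff.2 ⟨connected_induce_of_forall_reachableIn right_mem_segment ?_, ?_⟩
  · rintro z (rfl | rfl | hz)
    · exact hH.reachableIn_segment hx hy hxy
    · exact .refl _ _
    · exact (reachableIn_insert_inter_compAvoiding hz.1 hz.2 hy.right_notMem).mono
        (Set.subset_insert _ _)
  · rintro x' (rfl | rfl | hx')
    · exact connected_induce_segment_diff_left hy hxy
    · exact connected_induce_segment_diff_right hx hxy
    · exact hH.connected_induce_segment_diff hx hy hxy hx' (hI x' hx')

end

end IsBiconnectedBetween

variable (H s t) in
structure IsSeparatorEnum {k : ℕ} (n : Fin (k + 1) → W) : Prop where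
  mem_compAvoiding_of_lt : ∀ ⦃i j⦄, i < j → n i ∈ H.compAvoiding (n j) s
  separates_iff : ∀ x, H.Separates s t x ↔ ∃ i, n i = x

theorem IsBiconnectedBetween.exists_isSeparatorEnum [Finite W]
    (hH : H.IsBiconnectedBetween s t) :
    ∃ (k : ℕ) (n : Fin (k + 1) → W), H.IsSeparatorEnum s t n := by
  classical
  let P := {x // H.Separates s t x}
  have : IsStrictTotalOrder P fun a b => a.1 ∈ H.compAvoiding b.1 s :=
    { trichotomous := fun a b hab hba => Subtype.ext <| by_contra fun hne =>
        (hH.mem_compAvoiding_or_mem a.2 b.2 hne).elim hab hba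
      irrefl := fun a h => h.1 rfl
      trans := fun _ b c hab hbc => hH.mem_compAvoiding_trans b.2 c.2 hab hbc }
  let := linearOrderOfSTO fun a b : P => a.1 ∈ H.compAvoiding b.1 s
  have := Fintype.ofFinite P
  have hcard : Fintype.card P = Fintype.card P - 1 + 1 :=
    (Nat.sub_add_cancel (Fintype.card_pos_iff.2 ⟨⟨s, separates_left⟩⟩)).symm
  let e := Fintype.orderIsoFinOfCardEq P hcard
  refine ⟨_, fun i => (e i).1, fun i j hij => e.strictMono hij, fun x => ⟨fun hx => ?_, ?_⟩⟩
  · exact ⟨e.symm ⟨x, hx⟩, by simp⟩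
  · rintro ⟨i, rfl⟩
    exact (e i).2

namespace IsSeparatorEnum

variable {k : ℕ} {n : Fin (k + 1) → W} (hn : H.IsSeparatorEnum s t n)
include hn

theorem separates (i : Fin (k + 1)) : H.Separates s t (n i) :=
  (hn.separates_iff _).2 ⟨i, rfl⟩

theorem injective : Function.Injective n := by
  intro i j hij
  by_contra hne
  rcases lt_or_gt_of_ne hne with h | h
  exacts [(hn.mem_compAvoiding_of_lt h).1 hij, (hn.mem_compAvoiding_of_lt h).1 hij.symm]

theorem apply_zero : n 0 = s := by
  obtain ⟨i, hi⟩ := (hn.separates_iff s).1 separates_left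
  obtain rfl | hi0 := eq_or_ne i 0
  · exact hi
  · have := hn.mem_compAvoiding_of_lt (Fin.pos_iff_ne_zero.2 hi0)
    rw [hi, compAvoiding_self] at this
    exact this.elim

theorem apply_last : n (Fin.last k) = t := by
  obtain ⟨i, rfl⟩ := (hn.separates_iff t).1 separates_left.symm
  obtain rfl | hi := eq_or_ne i (Fin.last k)
  · rfl
  · exact absurd (hn.mem_compAvoiding_of_lt (Fin.lt_last_iff_ne_last.2 hi))
      (hn.separates _).right_notMem

variable (hH : H.IsBiconnectedBetween s t)
include hH

theorem mem_compAvoiding_left_iff {i j : Fin (k + 1)} :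
    n i ∈ H.compAvoiding (n j) s ↔ i < j := by
  refine ⟨fun h => ?_, fun h => hn.mem_compAvoiding_of_lt h⟩
  by_contra! hji
  obtain rfl | hji := hji.eq_or_lt
  · exact h.1 rfl
  · exact hH.notMem_compAvoiding_of_mem (hn.separates _) (hn.separates _)
      (hn.mem_compAvoiding_of_lt hji) h

theorem mem_compAvoiding_right_iff {i j : Fin (k + 1)} :
    n i ∈ H.compAvoiding (n j) t ↔ j < i := by
  rw [← hH.mem_compAvoiding_comm (hn.separates i) (hn.separates j),
    hn.mem_compAvoiding_left_iff hH]

theorem apply_mem_segment_iff {a : Fin (k + 1)} {i : Fin k} :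
    n a ∈ H.segment s t (n i.castSucc) (n i.succ) ↔ a = i.castSucc ∨ a = i.succ := by
  simp only [segment, Set.mem_insert_iff, Set.mem_inter_iff, hn.injective.eq_iff,
    hn.mem_compAvoiding_right_iff hH, hn.mem_compAvoiding_left_iff hH, Fin.lt_def, Fin.ext_iff,
    Fin.val_castSucc, Fin.val_succ]
  omega

theorem noCutSet_segment (i : Fin k) : NoCutSet H (H.segment s t (n i.castSucc) (n i.succ)) := by
  refine hH.noCutSet_segment (hn.separates _) (hn.separates _)
    (hn.mem_compAvoiding_of_lt Fin.castSucc_lt_succ) fun z hz hsep => ?_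
  obtain ⟨a, rfl⟩ := (hn.separates_iff z).1 hsep
  rcases (hn.apply_mem_segment_iff hH).1 (mem_segment_of_mem_inter hz) with rfl | rfl
  exacts [hz.1.1 rfl, hz.2.1 rfl]

/-- `C` lies on one side of every separator, before `t` but not before `s`: so there are two
consecutive separators with `C` after the first and before the second. -/
theorem exists_subset_segment (hC : NoCutSet H C) :
    ∃ i : Fin k, C ⊆ H.segment s t (n i.castSucc) (n i.succ) := by
  suffices ∀ j, C ⊆ insert (n j) (H.compAvoiding (n j) s) →
      ∃ i : Fin k, C ⊆ H.segment s t (n i.castSucc) (n i.succ) by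
    refine this (Fin.last k) fun z _ => ?_
    rw [hn.apply_last]
    obtain rfl | hzt := eq_or_ne z t
    exacts [Set.mem_insert _ _, Set.mem_insert_of_mem _ (hH.symm.mem_compAvoiding_left hzt)]
  intro j
  induction j using Fin.induction with
  | zero =>
    intro hCs
    rw [hn.apply_zero, compAvoiding_self, ← Set.singleton_def] at hCs
    exact (Set.not_nontrivial_singleton (hC.nontrivial.mono hCs)).elim
  | succ i ih =>
    refine fun hCi => (hH.subset_insert_compAvoiding hC (n i.castSucc)).elim ih fun hCt => ?_
    exact ⟨i, (Set.subset_inter hCt hCi).trans insert_inter_insert_subset_segment⟩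

theorem eq_of_segment_subset {i j : Fin k}
    (h : H.segment s t (n i.castSucc) (n i.succ) ⊆ H.segment s t (n j.castSucc) (n j.succ)) :
    i = j := by
  have h₁ := (hn.apply_mem_segment_iff hH).1 (h left_mem_segment)
  have h₂ := (hn.apply_mem_segment_iff hH).1 (h right_mem_segment)
  simp only [Fin.ext_iff, Fin.val_castSucc, Fin.val_succ] at h₁ h₂ ⊢
  omega

theorem isBlock_segment (i : Fin k) : IsBlock H (H.segment s t (n i.castSucc) (n i.succ)) := by
  refine ⟨hn.noCutSet_segment hH i, fun B hiB hB => ?_⟩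
  obtain ⟨j, hBj⟩ := hn.exists_subset_segment hH hB
  obtain rfl := hn.eq_of_segment_subset hH (hiB.trans hBj)
  exact hBj.antisymm hiB

theorem exists_eq_segment_of_isBlock (hC : IsBlock H C) :
    ∃ i : Fin k, C = H.segment s t (n i.castSucc) (n i.succ) := by
  obtain ⟨i, hi⟩ := hn.exists_subset_segment hH hC.1
  exact ⟨i, (hC.2 _ hi (hn.noCutSet_segment hH i)).symm⟩

theorem isCutVertex_iff : IsCutVertex H x ↔ ∃ i : Fin k, 0 < i.val ∧ x = n i.castSucc := by
  rw [hH.isCutVertex_iff, hn.separates_iff, ← hn.apply_zero, ← hn.apply_last]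
  constructor
  · rintro ⟨hx0, hxl, a, rfl⟩
    obtain ⟨i, rfl⟩ := Fin.exists_castSucc_eq.2 fun h => hxl (congrArg n h)
    exact ⟨i, Nat.pos_of_ne_zero fun h => hx0 (congrArg n (Fin.ext h)), rfl⟩
  · rintro ⟨i, hi, rfl⟩
    refine ⟨hn.injective.ne ?_, hn.injective.ne (Fin.castSucc_lt_last i).ne, _, rfl⟩
    exact Fin.ne_of_val_ne (by simp only [Fin.val_castSucc, Fin.val_zero]; omega)

end IsSeparatorEnum

end SimpleGraph

theorem TwoConnectedGraph.reachableIn_compl {V : Type*} {G : SimpleGraph V}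
    (h2c : TwoConnectedGraph G) {a b c : V} (hb : b ≠ a) (hc : c ≠ a) : G.ReachableIn {a}ᶜ b c :=
  (connected_induce_iff_reachableIn.1 (h2c.2.2 a)).2 b hb c hc

section splitVertex

open Sum

variable {V : Type*} {G : SimpleGraph V} {v : V} {N₁ : Set V} {a b : V} {z : V ⊕ Unit}

theorem reachableIn_splitVertex_inl {S : Set V} (hv : v ∉ S) (h : G.ReachableIn S a b) :
    (splitVertex G v N₁).ReachableIn (inl '' S) (inl a) (inl b) :=
  Relation.ReflTransGen.lift inl (fun _ _ ⟨hpq, hp, hq⟩ =>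
    ⟨⟨hpq, fun h => absurd (h ▸ hp) hv, fun h => absurd (h ▸ hq) hv⟩,
      Set.mem_image_of_mem _ hp, Set.mem_image_of_mem _ hq⟩) _ _ h

theorem image_inl_subset_compl {S : Set V} {x : V ⊕ Unit} (hx : ∀ p ∈ S, inl p ≠ x) :
    inl '' S ⊆ {x}ᶜ := by
  rintro _ ⟨p, hp, rfl⟩
  exact hx p hp

variable (h2c : TwoConnectedGraph G)
include h2c

theorem splitVertex_mem_compAvoiding_inl (hN₂ : (G.neighborSet v \ N₁).Nonempty)
    (hz : z ≠ inl v) : z ∈ (splitVertex G v N₁).compAvoiding (inl v) (inr ()) := by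
  obtain ⟨c, hcv, hcN⟩ := hN₂
  rcases z with b | ⟨⟩
  · have hbv : b ≠ v := fun h => hz (h ▸ rfl)
    have hS : inl '' {v}ᶜ ⊆ {inl v}ᶜ := image_inl_subset_compl fun p hp h => hp (inl_injective h)
    have hbc : (splitVertex G v N₁).ReachableIn {inl v}ᶜ (inl b) (inl c) :=
      (reachableIn_splitVertex_inl (S := {v}ᶜ) (fun h => h rfl)
        (h2c.reachableIn_compl hbv hcv.ne')).mono hS
    exact ⟨hz, (hbc.tail (c := inr ()) ⟨hcv.symm, hcN⟩ (hS ⟨c, hcv.ne', rfl⟩) (by simp)).symm⟩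
  · exact self_mem_compAvoiding hz

theorem splitVertex_mem_compAvoiding_inr (hN₁sub : N₁ ⊆ G.neighborSet v) (hN₁ : N₁.Nonempty)
    (hz : z ≠ inr ()) : z ∈ (splitVertex G v N₁).compAvoiding (inr ()) (inl v) := by
  obtain ⟨c, hc⟩ := hN₁
  have hcv : G.Adj v c := hN₁sub hc
  rcases z with b | ⟨⟩
  · obtain rfl | hbv := eq_or_ne b v
    · exact self_mem_compAvoiding hz
    have hS : inl '' {v}ᶜ ⊆ {inr ()}ᶜ := image_inl_subset_compl fun _ _ => inl_ne_inr
    have hbc : (splitVertex G v N₁).ReachableIn {inr ()}ᶜ (inl b) (inl c) :=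
      (reachableIn_splitVertex_inl (S := {v}ᶜ) (fun h => h rfl)
        (h2c.reachableIn_compl hbv hcv.ne')).mono hS
    have hcv' : (splitVertex G v N₁).Adj (inl c) (inl v) :=
      ⟨hcv.symm, fun h => (hcv.ne' h).elim, fun _ => hc⟩
    exact ⟨hz, (hbc.tail hcv' (hS ⟨c, hcv.ne', rfl⟩) inl_ne_inr).symm⟩
  · exact absurd rfl hz

/-- Follow a walk from `b` to `v` in `G - a` up to its first visit of `v`: the last edge `cv`
becomes an edge from `inl c` to `v₁` or `v₂`. -/
theorem splitVertex_mem_compAvoiding_inl_of_ne (hav : a ≠ v) (hz : z ≠ inl a) :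
    z ∈ (splitVertex G v N₁).compAvoiding (inl a) (inl v) ∨
      z ∈ (splitVertex G v N₁).compAvoiding (inl a) (inr ()) := by
  rcases z with b | ⟨⟩
  · obtain rfl | hbv := eq_or_ne b v
    · exact .inl (self_mem_compAvoiding hz)
    have hba : b ≠ a := fun h => hz (h ▸ rfl)
    obtain ⟨c, d, ⟨hca, hcv⟩, hd, hcd, hbc⟩ :=
      (h2c.reachableIn_compl hba hav.symm).exists_exit (T := {v}ᶜ) hbv (by simp)
    obtain rfl : v = d := (by simpa using hd.2 : d = v).symm
    have hS : inl '' ({a}ᶜ ∩ {v}ᶜ) ⊆ {inl a}ᶜ :=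
      image_inl_subset_compl fun p hp h => hp.1 (inl_injective h)
    have hbc' := (reachableIn_splitVertex_inl (N₁ := N₁) (fun h => h.2 rfl) hbc).mono hS
    have hc : inl c ∈ ({inl a}ᶜ : Set (V ⊕ Unit)) := hS ⟨c, ⟨hca, hcv⟩, rfl⟩
    by_cases hcN : c ∈ N₁
    · exact .inl ⟨hz, (hbc'.tail (c := inl v) ⟨hcd, fun h => (hcv h).elim, fun _ => hcN⟩ hc
        (by simpa using hav.symm)).symm⟩
    · exact .inr ⟨hz, (hbc'.tail (c := inr ()) ⟨hcd, hcN⟩ hc (by simp)).symm⟩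
  · exact .inr (self_mem_compAvoiding hz)

theorem isBiconnectedBetween_splitVertex (hN₁sub : N₁ ⊆ G.neighborSet v) (hN₁ : N₁.Nonempty)
    (hN₂ : (G.neighborSet v \ N₁).Nonempty) :
    (splitVertex G v N₁).IsBiconnectedBetween (inl v) (inr ()) where
  ne := inl_ne_inr
  reachable := by
    obtain ⟨c, hc⟩ := hN₁
    have hcv : G.Adj v c := hN₁sub hc
    have hcs := splitVertex_mem_compAvoiding_inl h2c hN₂ (z := inl c) (by simpa using hcv.ne')
    have hvc : (splitVertex G v N₁).Adj (inl v) (inl c) :=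
      ⟨hcv, fun _ => hc, fun h => (hcv.ne' h).elim⟩
    exact hvc.reachable.trans hcs.2.reachable.symm
  mem_compAvoiding x z hz := by
    rcases x with a | ⟨⟩
    · obtain rfl | hav := eq_or_ne a v
      · exact .inr (splitVertex_mem_compAvoiding_inl h2c hN₂ hz)
      · exact splitVertex_mem_compAvoiding_inl_of_ne h2c hav hz
    · exact .inl (splitVertex_mem_compAvoiding_inr h2c hN₁sub hN₁ hz)

end splitVertex

/-- Let `G` be a 2-connected graph, `v` a vertex of `G`, and
`(E₁, E₂)` a partition of the edges incident to `v` into two nonempty parts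
(encoded by the nonempty set of neighbours `N₁ ⊆ N(v)` with nonempty
complement `N(v) \ N₁`).  Let `G′` be obtained from `G` by splitting `v` into
`v₁` and `v₂`, where `vᵢ` keeps the edges of `Eᵢ`.  Then the block structure
of `G′` is a chain: its blocks can be ordered `B₀, …, B_{k-1}` so that each
`Bᵢ` has two distinguished distinct vertices `wᵢ, wᵢ′` with `w₀ = v₁`,
`w_{k-1}′ = v₂` and `wᵢ′ = w_{i+1}`, the cut vertices of `G′` being exactly
`w₁, …, w_{k-1}`. -/
theorem splitVertex_block_chain {V : Type*} (G : SimpleGraph V) (v : V)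
    (N₁ : Set V) (hN₁sub : N₁ ⊆ G.neighborSet v)
    (hN₁ : N₁.Nonempty) (hN₂ : (G.neighborSet v \ N₁).Nonempty)
    (h2c : TwoConnectedGraph G) :
    ∃ (k : ℕ) (_ : 1 ≤ k) (B : Fin k → Set (V ⊕ Unit))
      (w w' : Fin k → (V ⊕ Unit)),
      (∀ i, IsBlock (splitVertex G v N₁) (B i)) ∧
      (∀ C : Set (V ⊕ Unit), IsBlock (splitVertex G v N₁) C → ∃ i, C = B i) ∧
      (∀ i j, i ≠ j → B i ≠ B j) ∧
      (∀ i, w i ∈ B i ∧ w' i ∈ B i ∧ w i ≠ w' i) ∧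
      w ⟨0, by omega⟩ = Sum.inl v ∧
      w' ⟨k - 1, by omega⟩ = Sum.inr () ∧
      (∀ i : Fin k, ∀ h : i.val + 1 < k, w' i = w ⟨i.val + 1, h⟩) ∧
      (∀ x : V ⊕ Unit,
        IsCutVertex (splitVertex G v N₁) x ↔ ∃ i : Fin k, 0 < i.val ∧ x = w i) := by
  have hH := isBiconnectedBetween_splitVertex h2c hN₁sub hN₁ hN₂
  have : Finite V := Nat.finite_of_card_ne_zero (by have := h2c.1; omega)
  obtain ⟨k, n, hn⟩ := hH.exists_isSeparatorEnum
  have hk : k ≠ 0 := by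
    rintro rfl
    exact hH.ne (hn.apply_zero.symm.trans hn.apply_last)
  refine ⟨k, Nat.one_le_iff_ne_zero.2 hk,
    fun i => (splitVertex G v N₁).segment (Sum.inl v) (Sum.inr ()) (n i.castSucc) (n i.succ),
    fun i => n i.castSucc, fun i => n i.succ, hn.isBlock_segment hH,
    fun C hC => hn.exists_eq_segment_of_isBlock hH hC,
    fun i j hij h => hij (hn.eq_of_segment_subset hH h.subset),
    fun i => ⟨left_mem_segment, right_mem_segment, hn.injective.ne Fin.castSucc_lt_succ.ne⟩,
    (congrArg n (Fin.ext rfl)).trans hn.apply_zero,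
    (congrArg n (Fin.ext (by simp only [Fin.val_succ, Fin.val_last]; omega))).trans hn.apply_last,
    fun i h => rfl, fun x => hn.isCutVertex_iff hH⟩
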